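/- arXiv:2107.10461 — 2 statements merged into one kernel-verified Lean document; each statement's English description precedes it below -/
import Mathlib

section
/- For every A ∈ ℝ^{K×N} and every p : {0,1}^K → ℝ, the function ε ↦ \bar T(A,ε,p) is differentiable on ℝ and its derivative at every ε equals q(A,ε,p). -/
open Finset

/-- Value in {0,1} ⊆ ℝ of a binary activity state coordinate. -/
noncomputable def xv {K : ℕ} (x : Fin K → Bool) (k : Fin K) : ℝ := if x k then 1 else 0

/-- Conditional throughput T(A, ε, x). -/
noncomputable def condT {K N : ℕ} (A : Fin K → Fin N → ℝ) (ε : ℝ) (x : Fin K → Bool) : ℝ :=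
  ∑ n : Fin N, ∑ k : Fin K,
    xv x k * A k n * ε * ∏ l ∈ Finset.univ.erase k, (1 - xv x l * A l n * ε)

/-- Average throughput  \bar T(A, ε, p). -/
noncomputable def avgT {K N : ℕ} (A : Fin K → Fin N → ℝ) (ε : ℝ)
    (p : (Fin K → Bool) → ℝ) : ℝ :=
  ∑ x : Fin K → Bool, p x * condT A ε x

/-- q(A, ε, p). -/
noncomputable def qfun {K N : ℕ} (A : Fin K → Fin N → ℝ) (ε : ℝ)
    (p : (Fin K → Bool) → ℝ) : ℝ :=
  ∑ m ∈ Finset.Icc 1 K, (m : ℝ) ^ 2 * (-1) ^ (m - 1) * ε ^ (m - 1) *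
    ∑ n : Fin N, ∑ S ∈ Finset.univ.powersetCard m,
      (∑ x : Fin K → Bool, p x * ∏ k ∈ S, xv x k) * ∏ k ∈ S, A k n

lemma prod_one_sub' {α : Type*} [DecidableEq α] (c : α → ℝ) (s : Finset α) :
    ∏ l ∈ s, (1 - c l) = ∑ S ∈ s.powerset, (-1) ^ S.card * ∏ l ∈ S, c l := by
  have h : ∀ l ∈ s, (1 - c l) = (-c l) + 1 := by intros; ring
  rw [Finset.prod_congr rfl h, Finset.prod_add]
  refine Finset.sum_congr rfl fun S hS => ?_
  rw [Finset.prod_const_one, mul_one]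
  rw [show (fun l => -c l) = (fun l => (-1) * c l) from funext fun l => by ring]
  rw [Finset.prod_mul_distrib, Finset.prod_const]

lemma key {K : ℕ} (b : Fin K → ℝ) (t : ℝ) :
    ∑ k : Fin K, b k * t * ∏ l ∈ Finset.univ.erase k, (1 - b l * t)
    = ∑ m ∈ Finset.Icc 1 K, (m : ℝ) * (-1) ^ (m - 1) * t ^ m *
        ∑ S ∈ Finset.univ.powersetCard m, ∏ k ∈ S, b k := by
  have h1 : ∀ k : Fin K, b k * t * ∏ l ∈ Finset.univ.erase k, (1 - b l * t)
      = ∑ S ∈ (Finset.univ.erase k).powerset,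
          (-1) ^ S.card * t ^ (S.card + 1) * ∏ l ∈ insert k S, b l := by
    intro k
    rw [prod_one_sub' (fun l => b l * t), Finset.mul_sum]
    refine Finset.sum_congr rfl fun S hS => ?_
    have hk : k ∉ S := fun h =>
      (Finset.mem_erase.mp (Finset.mem_powerset.mp hS h)).1 rfl
    rw [Finset.prod_insert hk, Finset.prod_mul_distrib, Finset.prod_const]
    ring
  calc ∑ k : Fin K, b k * t * ∏ l ∈ Finset.univ.erase k, (1 - b l * t)
      = ∑ k : Fin K, ∑ S ∈ (Finset.univ.erase k).powerset,
          (-1) ^ S.card * t ^ (S.card + 1) * ∏ l ∈ insert k S, b l :=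
        Finset.sum_congr rfl fun k _ => h1 k
    _ = ∑ T ∈ (Finset.univ : Finset (Fin K)).powerset, ∑ k ∈ T,
          (-1) ^ (T.card - 1) * t ^ T.card * ∏ l ∈ T, b l := by
        rw [Finset.sum_sigma', Finset.sum_sigma']
        refine Finset.sum_nbij' (fun q => ⟨insert q.1 q.2, q.1⟩)
          (fun q => ⟨q.2, q.1.erase q.2⟩) ?_ ?_ ?_ ?_ ?_
        · rintro ⟨k, S⟩ hq
          simp only [Finset.mem_sigma, Finset.mem_powerset] at hq ⊢
          exact ⟨Finset.subset_univ _, Finset.mem_insert_self _ _⟩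
        · rintro ⟨T, k⟩ hq
          simp only [Finset.mem_sigma, Finset.mem_powerset] at hq ⊢
          exact ⟨Finset.mem_univ _,
            Finset.erase_subset_erase _ (Finset.subset_univ _)⟩
        · rintro ⟨k, S⟩ hq
          simp only [Finset.mem_sigma, Finset.mem_powerset] at hq
          have hk : k ∉ S := fun h => (Finset.mem_erase.mp (hq.2 h)).1 rfl
          simp [Finset.erase_insert hk]
        · rintro ⟨T, k⟩ hq
          simp only [Finset.mem_sigma] at hq
          simp [Finset.insert_erase hq.2]
        · rintro ⟨k, S⟩ hq
          simp only [Finset.mem_sigma, Finset.mem_powerset] at hq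
          have hk : k ∉ S := fun h => (Finset.mem_erase.mp (hq.2 h)).1 rfl
          simp [Finset.card_insert_of_notMem hk]
    _ = ∑ T ∈ (Finset.univ : Finset (Fin K)).powerset,
          (T.card : ℝ) * (-1) ^ (T.card - 1) * t ^ T.card * ∏ l ∈ T, b l := by
        refine Finset.sum_congr rfl fun T _ => ?_
        rw [Finset.sum_const, nsmul_eq_mul]; ring
    _ = ∑ m ∈ Finset.range (K + 1), ∑ T ∈ Finset.univ.powersetCard m,
          (m : ℝ) * (-1) ^ (m - 1) * t ^ m * ∏ l ∈ T, b l := by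
        rw [Finset.sum_powerset]
        simp only [Finset.card_univ, Fintype.card_fin]
        refine Finset.sum_congr rfl fun m _ => Finset.sum_congr rfl fun T hT => ?_
        rw [(Finset.mem_powersetCard.mp hT).2]
    _ = ∑ m ∈ Finset.Icc 1 K, (m : ℝ) * (-1) ^ (m - 1) * t ^ m *
          ∑ S ∈ Finset.univ.powersetCard m, ∏ k ∈ S, b k := by
        rw [← Finset.sum_subset (s₁ := Finset.Icc 1 K) (by
          intro m hm; simp only [Finset.mem_Icc] at hm
          simp only [Finset.mem_range]; omega) (by
          intro m hm hm'
          simp only [Finset.mem_range] at hm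
          simp only [Finset.mem_Icc] at hm'
          have : m = 0 := by omega
          subst this; simp)]
        refine Finset.sum_congr rfl fun m _ => ?_
        rw [Finset.mul_sum]

lemma condT_eq {K N : ℕ} (A : Fin K → Fin N → ℝ) (t : ℝ) (x : Fin K → Bool) :
    condT A t x = ∑ m ∈ Finset.Icc 1 K, (m : ℝ) * (-1) ^ (m - 1) * t ^ m *
      ∑ n : Fin N, ∑ S ∈ Finset.univ.powersetCard m,
        (∏ k ∈ S, xv x k) * ∏ k ∈ S, A k n := by
  unfold condT
  calc ∑ n : Fin N, ∑ k : Fin K,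
        xv x k * A k n * t * ∏ l ∈ Finset.univ.erase k, (1 - xv x l * A l n * t)
      = ∑ n : Fin N, ∑ m ∈ Finset.Icc 1 K, (m : ℝ) * (-1) ^ (m - 1) * t ^ m *
          ∑ S ∈ Finset.univ.powersetCard m, ∏ k ∈ S, (xv x k * A k n) :=
        Finset.sum_congr rfl fun n _ => key (fun k => xv x k * A k n) t
    _ = _ := by
        rw [Finset.sum_comm]
        refine Finset.sum_congr rfl fun m _ => ?_
        rw [Finset.mul_sum]
        refine Finset.sum_congr rfl fun n _ => ?_
        congr 1
        exact Finset.sum_congr rfl fun S _ => Finset.prod_mul_distrib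

lemma avgT_eq {K N : ℕ} (A : Fin K → Fin N → ℝ) (t : ℝ) (p : (Fin K → Bool) → ℝ) :
    avgT A t p = ∑ m ∈ Finset.Icc 1 K,
      ((m : ℝ) * (-1) ^ (m - 1) *
        ∑ n : Fin N, ∑ S ∈ Finset.univ.powersetCard m,
          (∑ x : Fin K → Bool, p x * ∏ k ∈ S, xv x k) * ∏ k ∈ S, A k n) * t ^ m := by
  unfold avgT
  simp only [condT_eq, Finset.mul_sum]
  rw [Finset.sum_comm]
  refine Finset.sum_congr rfl fun m _ => ?_
  simp only [Finset.sum_mul, Finset.mul_sum]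
  rw [Finset.sum_comm]
  refine Finset.sum_congr rfl fun n _ => ?_
  rw [Finset.sum_comm]
  refine Finset.sum_congr rfl fun S _ => ?_
  exact Finset.sum_congr rfl fun x _ => by ring

theorem stmt_4 (K N : ℕ) (hK : 1 ≤ K) (hN : 1 ≤ N)
    (A : Fin K → Fin N → ℝ) (p : (Fin K → Bool) → ℝ) (ε : ℝ) :
    HasDerivAt (fun t => avgT A t p) (qfun A ε p) ε := by
  have hfe : (fun t => avgT A t p) = fun t => ∑ m ∈ Finset.Icc 1 K,
      ((m : ℝ) * (-1) ^ (m - 1) *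
        ∑ n : Fin N, ∑ S ∈ Finset.univ.powersetCard m,
          (∑ x : Fin K → Bool, p x * ∏ k ∈ S, xv x k) * ∏ k ∈ S, A k n) * t ^ m :=
    funext fun t => avgT_eq A t p
  rw [hfe]
  have hq : qfun A ε p = ∑ m ∈ Finset.Icc 1 K,
      ((m : ℝ) * (-1) ^ (m - 1) *
        ∑ n : Fin N, ∑ S ∈ Finset.univ.powersetCard m,
          (∑ x : Fin K → Bool, p x * ∏ k ∈ S, xv x k) * ∏ k ∈ S, A k n) *
        ((m : ℝ) * ε ^ (m - 1)) := by
    unfold qfun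
    exact Finset.sum_congr rfl fun m _ => by ring
  rw [hq]
  exact HasDerivAt.fun_sum fun m _ =>
    ((hasDerivAt_pow m ε).const_mul _).congr_deriv (by ring)
end

section
/- Let w = (w_x)_{x∈{0,1}^K} with w_x ∈ [0,1] for all x, and let g : ℝ^{K×N} → ℝ be g(B) = Σ_{x∈{0,1}^K} w_x T(B,1,x), with Hessian H(B) ∈ ℝ^{(KN)×(KN)} of second partial derivatives with respect to the entries b_{k,n}. Then for every B all of whose entries lie in [0,1], the matrix C·I − H(B) is positive semidefinite, where C = √( N · Σ_{k=1}^K Σ_{k'≠k} ( Σ_{x∈{0,1}^K} w_x x_k x_{k'} ‖x‖₁ )² ), ‖x‖₁ = Σ_{j=1}^K x_j, and I is the (KN)×(KN) identity matrix. -/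
open Finset

/-- Conditional throughput T(B, 1, x), with B viewed as a function on index pairs. -/
noncomputable def T1 {K N : ℕ} (x : Fin K → Bool) (B : Fin K × Fin N → ℝ) : ℝ :=
  ∑ n : Fin N, ∑ k : Fin K,
    xv x k * B (k, n) * ∏ l ∈ Finset.univ.erase k, (1 - xv x l * B (l, n))

/-- Partial derivative of f : ℝ^{K×N} → ℝ with respect to the i-th coordinate, at B. -/
noncomputable def pderiv {K N : ℕ} (i : Fin K × Fin N)
    (f : (Fin K × Fin N → ℝ) → ℝ) (B : Fin K × Fin N → ℝ) : ℝ :=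
  deriv (fun t => f (Function.update B i t)) (B i)

/-- Hessian matrix of f at B. -/
noncomputable def hess {K N : ℕ} (f : (Fin K × Fin N → ℝ) → ℝ)
    (B : Fin K × Fin N → ℝ) : Matrix (Fin K × Fin N) (Fin K × Fin N) ℝ :=
  Matrix.of fun i j => pderiv i (fun B' => pderiv j f B') B

section Aux

variable {K N : ℕ}

lemma xv_nonneg (x : Fin K → Bool) (k : Fin K) : 0 ≤ xv x k := by
  unfold xv; split <;> norm_num

lemma xv_le_one (x : Fin K → Bool) (k : Fin K) : xv x k ≤ 1 := by
  unfold xv; split <;> norm_num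

lemma xv_sq (x : Fin K → Bool) (k : Fin K) : xv x k * xv x k = xv x k := by
  unfold xv; split <;> norm_num

noncomputable def P0 (x : Fin K → Bool) (B : Fin K × Fin N → ℝ) (n : Fin N)
    (S : Finset (Fin K)) : ℝ := ∏ l ∈ S, (1 - xv x l * B (l, n))

noncomputable def Dc (x : Fin K → Bool) (B : Fin K × Fin N → ℝ) (k₀ : Fin K) (n₀ : Fin N) : ℝ :=
  xv x k₀ * P0 x B n₀ (univ.erase k₀)
  - ∑ k ∈ univ.erase k₀, xv x k₀ * xv x k * B (k, n₀) * P0 x B n₀ ((univ.erase k).erase k₀)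

noncomputable def Ec (x : Fin K → Bool) (B : Fin K × Fin N → ℝ) (k₀ k₁ : Fin K) (n₀ : Fin N) : ℝ :=
  - (xv x k₀ * xv x k₁ * P0 x B n₀ ((univ.erase k₀).erase k₁))
  - xv x k₀ * xv x k₁ * P0 x B n₀ ((univ.erase k₁).erase k₀)
  + ∑ k ∈ (univ.erase k₀).erase k₁,
      xv x k₀ * xv x k₁ * xv x k * B (k, n₀) * P0 x B n₀ (((univ.erase k).erase k₀).erase k₁)

lemma P0_update_of_not_mem (x : Fin K → Bool) (B : Fin K × Fin N → ℝ) (n : Fin N)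
    (S : Finset (Fin K)) {i : Fin K × Fin N} (t : ℝ) (h : i.2 ≠ n ∨ i.1 ∉ S) :
    P0 x (Function.update B i t) n S = P0 x B n S := by
  refine Finset.prod_congr rfl fun l hl => ?_
  rw [Function.update_of_ne]
  intro he
  rcases h with h | h
  · exact h (by rw [← he])
  · exact h (by rw [← he]; exact hl)

lemma P0_update_of_mem (x : Fin K → Bool) (B : Fin K × Fin N → ℝ) (n : Fin N)
    {S : Finset (Fin K)} {k₁ : Fin K} (t : ℝ) (h : k₁ ∈ S) :
    P0 x (Function.update B (k₁, n) t) n S = (1 - xv x k₁ * t) * P0 x B n (S.erase k₁) := by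
  unfold P0
  rw [← Finset.mul_prod_erase S _ h, Function.update_self]
  congr 1
  refine Finset.prod_congr rfl fun l hl => ?_
  rw [Function.update_of_ne]
  intro he
  exact (Finset.mem_erase.mp hl).1 (congrArg Prod.fst he)

lemma T1_eq (x : Fin K → Bool) (B : Fin K × Fin N → ℝ) :
    T1 x B = ∑ n, ∑ k, xv x k * B (k, n) * P0 x B n (univ.erase k) := rfl

lemma hasDerivAt_T1 (x : Fin K → Bool) (B : Fin K × Fin N → ℝ) (k₀ : Fin K) (n₀ : Fin N)
    (s : ℝ) :
    HasDerivAt (fun t => T1 x (Function.update B (k₀, n₀) t)) (Dc x B k₀ n₀) s := by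
  have key : ∀ t, T1 x (Function.update B (k₀, n₀) t) =
      ((∑ n ∈ univ.erase n₀, ∑ k, xv x k * B (k, n) * P0 x B n (univ.erase k))
        + ∑ k ∈ univ.erase k₀, xv x k * B (k, n₀) * P0 x B n₀ ((univ.erase k).erase k₀))
      + t * Dc x B k₀ n₀ := by
    intro t
    rw [T1_eq, ← Finset.sum_erase_add _ _ (mem_univ n₀)]
    have h1 : ∑ n ∈ univ.erase n₀, ∑ k, xv x k * Function.update B (k₀, n₀) t (k, n) *
        P0 x (Function.update B (k₀, n₀) t) n (univ.erase k)
        = ∑ n ∈ univ.erase n₀, ∑ k, xv x k * B (k, n) * P0 x B n (univ.erase k) := by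
      refine Finset.sum_congr rfl fun n hn => Finset.sum_congr rfl fun k _ => ?_
      have hn' : n ≠ n₀ := (Finset.mem_erase.mp hn).1
      rw [Function.update_of_ne (fun he => hn' (congrArg Prod.snd he)),
        P0_update_of_not_mem x B n _ t (Or.inl (Ne.symm hn'))]
    have h2 : ∑ k, xv x k * Function.update B (k₀, n₀) t (k, n₀) *
        P0 x (Function.update B (k₀, n₀) t) n₀ (univ.erase k)
        = (∑ k ∈ univ.erase k₀, xv x k * B (k, n₀) * P0 x B n₀ ((univ.erase k).erase k₀))
          + t * Dc x B k₀ n₀ := by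
      rw [← Finset.sum_erase_add _ _ (mem_univ k₀), Function.update_self,
        P0_update_of_not_mem x B n₀ _ t (Or.inr (Finset.notMem_erase _ _))]
      have h3 : ∀ k ∈ univ.erase k₀, xv x k * Function.update B (k₀, n₀) t (k, n₀) *
          P0 x (Function.update B (k₀, n₀) t) n₀ (univ.erase k)
          = xv x k * B (k, n₀) * P0 x B n₀ ((univ.erase k).erase k₀)
            - t * (xv x k₀ * xv x k * B (k, n₀) * P0 x B n₀ ((univ.erase k).erase k₀)) := by
        intro k hk
        have hk' : k ≠ k₀ := (Finset.mem_erase.mp hk).1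
        rw [Function.update_of_ne (fun he => hk' (congrArg Prod.fst he)),
          P0_update_of_mem x B n₀ t (Finset.mem_erase.mpr ⟨Ne.symm hk', mem_univ _⟩)]
        ring
      rw [Finset.sum_congr rfl h3, Finset.sum_sub_distrib, ← Finset.mul_sum]
      unfold Dc; ring
    rw [h1, h2]; ring
  have hf : (fun t => T1 x (Function.update B (k₀, n₀) t)) =
      (fun t => ((∑ n ∈ univ.erase n₀, ∑ k, xv x k * B (k, n) * P0 x B n (univ.erase k))
        + ∑ k ∈ univ.erase k₀, xv x k * B (k, n₀) * P0 x B n₀ ((univ.erase k).erase k₀))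
      + t * Dc x B k₀ n₀) := funext key
  rw [hf]
  simpa using ((hasDerivAt_id' s).mul_const (Dc x B k₀ n₀))

end Aux

section Aux2
variable {K N : ℕ}

lemma Dc_update_eq (x : Fin K → Bool) (B : Fin K × Fin N → ℝ) (k₀ : Fin K) (n₀ : Fin N)
    {i : Fin K × Fin N} (t : ℝ) (h : i.2 ≠ n₀ ∨ i.1 = k₀) :
    Dc x (Function.update B i t) k₀ n₀ = Dc x B k₀ n₀ := by
  unfold Dc
  rw [P0_update_of_not_mem x B n₀ _ t (h.imp id fun h2 => h2 ▸ Finset.notMem_erase _ _)]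
  congr 1
  refine Finset.sum_congr rfl fun k hk => ?_
  have hk' : k ≠ k₀ := (Finset.mem_erase.mp hk).1
  rw [P0_update_of_not_mem x B n₀ _ t (h.imp id fun h2 => h2 ▸ Finset.notMem_erase _ _),
    Function.update_of_ne]
  intro he
  rcases h with h | h
  · exact h (by rw [← he])
  · exact hk' (by rw [← h, ← he])

lemma hasDerivAt_Dc (x : Fin K → Bool) (B : Fin K × Fin N → ℝ) {k₀ k₁ : Fin K} (n₀ : Fin N)
    (hne : k₁ ≠ k₀) (s : ℝ) :
    HasDerivAt (fun t => Dc x (Function.update B (k₁, n₀) t) k₀ n₀) (Ec x B k₀ k₁ n₀) s := by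
  have hk₁ : k₁ ∈ univ.erase k₀ := Finset.mem_erase.mpr ⟨hne, mem_univ _⟩
  have key : ∀ t, Dc x (Function.update B (k₁, n₀) t) k₀ n₀ =
      (xv x k₀ * P0 x B n₀ ((univ.erase k₀).erase k₁)
        - ∑ k ∈ (univ.erase k₀).erase k₁, xv x k₀ * xv x k * B (k, n₀) *
            P0 x B n₀ (((univ.erase k).erase k₀).erase k₁))
      + t * Ec x B k₀ k₁ n₀ := by
    intro t
    unfold Dc
    rw [P0_update_of_mem x B n₀ t hk₁, ← Finset.sum_erase_add _ _ hk₁, Function.update_self]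
    have hnm : (k₁ : Fin K) ∉ (univ.erase k₁).erase k₀ :=
      fun hmem => Finset.notMem_erase k₁ univ (Finset.mem_of_mem_erase hmem)
    rw [P0_update_of_not_mem x B n₀ _ t (Or.inr hnm)]
    have h3 : ∀ k ∈ (univ.erase k₀).erase k₁,
        xv x k₀ * xv x k * Function.update B (k₁, n₀) t (k, n₀) *
          P0 x (Function.update B (k₁, n₀) t) n₀ ((univ.erase k).erase k₀)
        = xv x k₀ * xv x k * B (k, n₀) * P0 x B n₀ (((univ.erase k).erase k₀).erase k₁)
          - t * (xv x k₀ * xv x k₁ * xv x k * B (k, n₀) *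
              P0 x B n₀ (((univ.erase k).erase k₀).erase k₁)) := by
      intro k hk
      have hk1 : k ≠ k₁ := (Finset.mem_erase.mp hk).1
      have hk0 : k ≠ k₀ := (Finset.mem_erase.mp (Finset.mem_of_mem_erase hk)).1
      have hmem : k₁ ∈ (univ.erase k).erase k₀ :=
        Finset.mem_erase.mpr ⟨hne, Finset.mem_erase.mpr ⟨Ne.symm hk1, mem_univ _⟩⟩
      rw [Function.update_of_ne (fun he => hk1 (congrArg Prod.fst he)),
        P0_update_of_mem x B n₀ t hmem]
      ring
    rw [Finset.sum_congr rfl h3, Finset.sum_sub_distrib, ← Finset.mul_sum]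
    unfold Ec; ring
  have hf := funext key
  rw [hf]
  simpa using ((hasDerivAt_id' s).mul_const (Ec x B k₀ k₁ n₀))

lemma pderiv_g (w : (Fin K → Bool) → ℝ) (B : Fin K × Fin N → ℝ) (j : Fin K × Fin N) :
    pderiv j (fun B' => ∑ x : Fin K → Bool, w x * T1 x B') B
      = ∑ x : Fin K → Bool, w x * Dc x B j.1 j.2 := by
  obtain ⟨k₀, n₀⟩ := j
  exact (HasDerivAt.fun_sum fun x _ =>
    (hasDerivAt_T1 x B k₀ n₀ (B (k₀, n₀))).const_mul (w x)).deriv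

lemma hess_g (w : (Fin K → Bool) → ℝ) (B : Fin K × Fin N → ℝ) (i j : Fin K × Fin N) :
    hess (fun B' => ∑ x : Fin K → Bool, w x * T1 x B') B i j =
      if i.2 = j.2 ∧ i.1 ≠ j.1 then ∑ x : Fin K → Bool, w x * Ec x B j.1 i.1 j.2 else 0 := by
  obtain ⟨k₁, n₁⟩ := i
  obtain ⟨k₀, n₀⟩ := j
  show pderiv (k₁, n₁) (fun B' => pderiv (k₀, n₀) (fun B'' => ∑ x : Fin K → Bool, w x * T1 x B'') B') B = _
  have h1 : (fun B' => pderiv (k₀, n₀) (fun B'' => ∑ x : Fin K → Bool, w x * T1 x B'') B')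
      = fun B' => ∑ x : Fin K → Bool, w x * Dc x B' k₀ n₀ :=
    funext fun B' => pderiv_g w B' (k₀, n₀)
  rw [h1]
  unfold pderiv
  by_cases hc : (n₁ : Fin N) = n₀ ∧ k₁ ≠ k₀
  · obtain ⟨h2, h1'⟩ := hc
    subst h2
    rw [if_pos ⟨rfl, h1'⟩]
    exact (HasDerivAt.fun_sum fun x _ =>
      (hasDerivAt_Dc x B n₁ h1' (B (k₁, n₁))).const_mul (w x)).deriv
  · rw [if_neg hc]
    have hcond : ∀ t : ℝ, ∑ x : Fin K → Bool, w x * Dc x (Function.update B (k₁, n₁) t) k₀ n₀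
        = ∑ x : Fin K → Bool, w x * Dc x B k₀ n₀ := by
      intro t
      refine Finset.sum_congr rfl fun x _ => ?_
      rw [Dc_update_eq x B k₀ n₀ t ?_]
      rcases not_and_or.mp hc with h | h
      · exact Or.inl h
      · exact Or.inr (not_not.mp h)
    rw [funext hcond, deriv_const]

lemma Ec_symm (x : Fin K → Bool) (B : Fin K × Fin N → ℝ) (k₀ k₁ : Fin K) (n₀ : Fin N) :
    Ec x B k₀ k₁ n₀ = Ec x B k₁ k₀ n₀ := by
  unfold Ec
  rw [show ((univ : Finset (Fin K)).erase k₀).erase k₁ = (univ.erase k₁).erase k₀ from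
    Finset.erase_right_comm]
  have h2 : ∀ k ∈ ((univ : Finset (Fin K)).erase k₁).erase k₀,
      xv x k₀ * xv x k₁ * xv x k * B (k, n₀) * P0 x B n₀ (((univ.erase k).erase k₀).erase k₁)
      = xv x k₁ * xv x k₀ * xv x k * B (k, n₀) * P0 x B n₀ (((univ.erase k).erase k₁).erase k₀) := by
    intro k _
    rw [show (((univ : Finset (Fin K)).erase k).erase k₀).erase k₁
      = ((univ.erase k).erase k₁).erase k₀ from Finset.erase_right_comm]
    ring
  rw [Finset.sum_congr rfl h2]
  ring

end Aux2

section Aux3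
variable {K N : ℕ}

lemma factor_mem (x : Fin K → Bool) {B : Fin K × Fin N → ℝ}
    (hB : ∀ i, B i ∈ Set.Icc (0 : ℝ) 1) (l : Fin K) (n : Fin N) :
    xv x l * B (l, n) ∈ Set.Icc (0 : ℝ) 1 :=
  ⟨mul_nonneg (xv_nonneg x l) (hB (l, n)).1,
    mul_le_one₀ (xv_le_one x l) (hB (l, n)).1 (hB (l, n)).2⟩

lemma P0_nonneg (x : Fin K → Bool) {B : Fin K × Fin N → ℝ}
    (hB : ∀ i, B i ∈ Set.Icc (0 : ℝ) 1) (n : Fin N) (S : Finset (Fin K)) :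
    0 ≤ P0 x B n S :=
  Finset.prod_nonneg fun l _ => by linarith [(factor_mem x hB l n).2]

lemma P0_le_one (x : Fin K → Bool) {B : Fin K × Fin N → ℝ}
    (hB : ∀ i, B i ∈ Set.Icc (0 : ℝ) 1) (n : Fin N) (S : Finset (Fin K)) :
    P0 x B n S ≤ 1 :=
  Finset.prod_le_one (fun l _ => by linarith [(factor_mem x hB l n).2])
    (fun l _ => by linarith [(factor_mem x hB l n).1])

lemma Ec_abs_le (x : Fin K → Bool) {B : Fin K × Fin N → ℝ}
    (hB : ∀ i, B i ∈ Set.Icc (0 : ℝ) 1) {k₀ k₁ : Fin K} (n₀ : Fin N) (hne : k₀ ≠ k₁) :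
    |Ec x B k₀ k₁ n₀| ≤ xv x k₀ * xv x k₁ * ∑ j, xv x j := by
  have hk₁ : k₁ ∈ univ.erase k₀ := Finset.mem_erase.mpr ⟨Ne.symm hne, mem_univ _⟩
  have hsplit : ∑ j : Fin K, xv x j
      = xv x k₀ + (xv x k₁ + ∑ k ∈ (univ.erase k₀).erase k₁, xv x k) := by
    rw [← Finset.sum_erase_add _ _ (mem_univ k₀), ← Finset.sum_erase_add _ _ hk₁]
    ring
  have habs : ∀ (S : Finset (Fin K)),
      |xv x k₀ * xv x k₁ * P0 x B n₀ S| ≤ xv x k₀ * xv x k₁ := by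
    intro S
    rw [abs_of_nonneg (mul_nonneg (mul_nonneg (xv_nonneg x k₀) (xv_nonneg x k₁))
      (P0_nonneg x hB n₀ S))]
    calc xv x k₀ * xv x k₁ * P0 x B n₀ S ≤ xv x k₀ * xv x k₁ * 1 :=
          mul_le_mul_of_nonneg_left (P0_le_one x hB n₀ S)
            (mul_nonneg (xv_nonneg x k₀) (xv_nonneg x k₁))
      _ = xv x k₀ * xv x k₁ := mul_one _
  have hsum : |∑ k ∈ (univ.erase k₀).erase k₁,
      xv x k₀ * xv x k₁ * xv x k * B (k, n₀) * P0 x B n₀ (((univ.erase k).erase k₀).erase k₁)|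
      ≤ ∑ k ∈ (univ.erase k₀).erase k₁, xv x k₀ * xv x k₁ * xv x k := by
    refine le_trans (Finset.abs_sum_le_sum_abs _ _) (Finset.sum_le_sum fun k _ => ?_)
    have h1 : (0:ℝ) ≤ xv x k₀ * xv x k₁ * xv x k :=
      mul_nonneg (mul_nonneg (xv_nonneg x k₀) (xv_nonneg x k₁)) (xv_nonneg x k)
    rw [abs_of_nonneg (mul_nonneg (mul_nonneg h1 (hB (k, n₀)).1) (P0_nonneg x hB n₀ _))]
    calc xv x k₀ * xv x k₁ * xv x k * B (k, n₀) * P0 x B n₀ _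
        ≤ xv x k₀ * xv x k₁ * xv x k * B (k, n₀) * 1 :=
          mul_le_mul_of_nonneg_left (P0_le_one x hB n₀ _) (mul_nonneg h1 (hB (k, n₀)).1)
      _ = xv x k₀ * xv x k₁ * (xv x k * B (k, n₀)) := by ring
      _ ≤ xv x k₀ * xv x k₁ * (xv x k * 1) := by
          refine mul_le_mul_of_nonneg_left ?_ (mul_nonneg (xv_nonneg x k₀) (xv_nonneg x k₁))
          exact mul_le_mul_of_nonneg_left (hB (k, n₀)).2 (xv_nonneg x k)
      _ = xv x k₀ * xv x k₁ * xv x k := by ring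
  have hbound_eq : xv x k₀ * xv x k₁ * ∑ j, xv x j
      = xv x k₀ * xv x k₁ + xv x k₁ * xv x k₀ +
        ∑ k ∈ (univ.erase k₀).erase k₁, xv x k₀ * xv x k₁ * xv x k := by
    rw [hsplit, mul_add, mul_add, Finset.mul_sum]
    have i0 := xv_sq x k₀
    have i1 := xv_sq x k₁
    linear_combination xv x k₁ * i0 + xv x k₀ * i1
  calc |Ec x B k₀ k₁ n₀|
      ≤ |(- (xv x k₀ * xv x k₁ * P0 x B n₀ ((univ.erase k₀).erase k₁))
          - xv x k₀ * xv x k₁ * P0 x B n₀ ((univ.erase k₁).erase k₀))| +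
        |∑ k ∈ (univ.erase k₀).erase k₁,
          xv x k₀ * xv x k₁ * xv x k * B (k, n₀) *
            P0 x B n₀ (((univ.erase k).erase k₀).erase k₁)| := abs_add_le _ _
    _ ≤ (|xv x k₀ * xv x k₁ * P0 x B n₀ ((univ.erase k₀).erase k₁)| +
          |xv x k₀ * xv x k₁ * P0 x B n₀ ((univ.erase k₁).erase k₀)|) +
        ∑ k ∈ (univ.erase k₀).erase k₁, xv x k₀ * xv x k₁ * xv x k := by
        refine add_le_add ?_ hsum
        refine le_trans (abs_sub _ _) ?_
        rw [abs_neg]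
    _ ≤ (xv x k₀ * xv x k₁ + xv x k₀ * xv x k₁) +
        ∑ k ∈ (univ.erase k₀).erase k₁, xv x k₀ * xv x k₁ * xv x k := by
        exact add_le_add (add_le_add (habs _) (habs _)) le_rfl
    _ = xv x k₀ * xv x k₁ * ∑ j, xv x j := by rw [hbound_eq]; ring

end Aux3

theorem stmt_14 (K N : ℕ) (hK : 1 ≤ K) (hN : 1 ≤ N)
    (w : (Fin K → Bool) → ℝ) (hw : ∀ x, w x ∈ Set.Icc (0 : ℝ) 1)
    (B : Fin K × Fin N → ℝ) (hB : ∀ i, B i ∈ Set.Icc (0 : ℝ) 1) :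
    ((Real.sqrt ((N : ℝ) * ∑ k : Fin K, ∑ k' ∈ Finset.univ.erase k,
        (∑ x : Fin K → Bool, w x * xv x k * xv x k' * ∑ j : Fin K, xv x j) ^ 2)) •
        (1 : Matrix (Fin K × Fin N) (Fin K × Fin N) ℝ) -
      hess (fun B' => ∑ x : Fin K → Bool, w x * T1 x B') B).PosSemidef := by
  classical
  set H : Matrix (Fin K × Fin N) (Fin K × Fin N) ℝ :=
    hess (fun B' => ∑ x : Fin K → Bool, w x * T1 x B') B with hHdef
  set M : Fin K → Fin K → ℝ :=
    fun k k' => ∑ x : Fin K → Bool, w x * xv x k * xv x k' * ∑ j : Fin K, xv x j with hMdef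
  have hMsymm : ∀ k k', M k k' = M k' k := fun k k' =>
    Finset.sum_congr rfl fun x _ => by ring
  have hMnonneg : ∀ k k', 0 ≤ M k k' := fun k k' =>
    Finset.sum_nonneg fun x _ =>
      mul_nonneg (mul_nonneg (mul_nonneg (hw x).1 (xv_nonneg x k)) (xv_nonneg x k'))
        (Finset.sum_nonneg fun j _ => xv_nonneg x j)
  set Csq : ℝ := (N : ℝ) * ∑ k : Fin K, ∑ k' ∈ Finset.univ.erase k, (M k k') ^ 2 with hCsqdef
  have hCsq0 : 0 ≤ Csq := mul_nonneg (Nat.cast_nonneg _)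
    (Finset.sum_nonneg fun k _ => Finset.sum_nonneg fun k' _ => sq_nonneg _)
  -- entry formula and symmetry
  have hHapp : ∀ i j : Fin K × Fin N, H i j =
      if i.2 = j.2 ∧ i.1 ≠ j.1 then ∑ x : Fin K → Bool, w x * Ec x B j.1 i.1 j.2 else 0 :=
    fun i j => hess_g w B i j
  have hHsym : ∀ i j, H j i = H i j := by
    intro i j
    rw [hHapp, hHapp]
    by_cases h : i.2 = j.2 ∧ i.1 ≠ j.1
    · rw [if_pos ⟨h.1.symm, Ne.symm h.2⟩, if_pos h, h.1]
      exact Finset.sum_congr rfl fun x _ => by rw [Ec_symm]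
    · rw [if_neg h, if_neg (fun hc => h ⟨hc.1.symm, Ne.symm hc.2⟩)]
  -- entrywise bound
  have hentry : ∀ i j : Fin K × Fin N, (H i j) ^ 2 ≤
      (if i.2 = j.2 ∧ i.1 ≠ j.1 then (M j.1 i.1) ^ 2 else 0) := by
    intro i j
    rw [hHapp]
    split_ifs with h
    · have habs : |∑ x : Fin K → Bool, w x * Ec x B j.1 i.1 j.2| ≤ M j.1 i.1 := by
        refine le_trans (Finset.abs_sum_le_sum_abs _ _) (Finset.sum_le_sum fun x _ => ?_)
        rw [abs_mul, abs_of_nonneg (hw x).1]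
        calc w x * |Ec x B j.1 i.1 j.2|
            ≤ w x * (xv x j.1 * xv x i.1 * ∑ jj, xv x jj) :=
              mul_le_mul_of_nonneg_left (Ec_abs_le x hB j.2 (Ne.symm h.2)) (hw x).1
          _ = w x * xv x j.1 * xv x i.1 * ∑ jj, xv x jj := by ring
      calc (∑ x : Fin K → Bool, w x * Ec x B j.1 i.1 j.2) ^ 2
          = |∑ x : Fin K → Bool, w x * Ec x B j.1 i.1 j.2| ^ 2 := (sq_abs _).symm
        _ ≤ (M j.1 i.1) ^ 2 := pow_le_pow_left₀ (abs_nonneg _) habs 2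
    · simp
  -- total squared entries bound
  have hcompute : (∑ p : (Fin K × Fin N) × (Fin K × Fin N),
      (if p.1.2 = p.2.2 ∧ p.1.1 ≠ p.2.1 then (M p.2.1 p.1.1) ^ 2 else 0)) = Csq := by
    rw [Fintype.sum_prod_type]
    have step1 : ∀ i : Fin K × Fin N,
        (∑ p2 : Fin K × Fin N, (if i.2 = p2.2 ∧ i.1 ≠ p2.1 then (M p2.1 i.1) ^ 2 else 0))
        = ∑ k' ∈ Finset.univ.erase i.1, (M k' i.1) ^ 2 := by
      intro i
      rw [Fintype.sum_prod_type]
      have : ∀ k₀ : Fin K, (∑ n₀ : Fin N, (if i.2 = n₀ ∧ i.1 ≠ k₀ then (M k₀ i.1) ^ 2 else 0))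
          = (if i.1 ≠ k₀ then (M k₀ i.1) ^ 2 else 0) := by
        intro k₀
        simp only [ite_and]
        rw [Finset.sum_ite_eq]
        simp
      rw [Finset.sum_congr rfl fun k₀ _ => this k₀]
      rw [← Finset.sum_filter, Finset.filter_ne]
    rw [Finset.sum_congr rfl fun i _ => step1 i, Fintype.sum_prod_type]
    have step3 : ∀ k : Fin K, ∑ _n : Fin N, (∑ k' ∈ Finset.univ.erase k, (M k' k) ^ 2)
        = (N : ℝ) * ∑ k' ∈ Finset.univ.erase k, (M k k') ^ 2 := by
      intro k
      rw [Finset.sum_const, card_univ, Fintype.card_fin, nsmul_eq_mul]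
      congr 1
      exact Finset.sum_congr rfl fun k' _ => by rw [hMsymm]
    rw [Finset.sum_congr rfl fun k _ => step3 k, ← Finset.mul_sum, hCsqdef]
  refine Matrix.PosSemidef.of_dotProduct_mulVec_nonneg ?_ ?_
  · -- Hermitian
    show (Real.sqrt Csq • (1 : Matrix (Fin K × Fin N) (Fin K × Fin N) ℝ) - H).conjTranspose = _
    ext i j
    simp only [Matrix.conjTranspose_apply, Matrix.sub_apply, Matrix.smul_apply,
      Matrix.one_apply, star_trivial, smul_eq_mul]
    rw [hHsym i j]
    congr 2
    simp [eq_comm]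
  · intro v
    have hQ0 : (0:ℝ) ≤ ∑ i : Fin K × Fin N, v i ^ 2 :=
      Finset.sum_nonneg fun i _ => sq_nonneg _
    set Q : ℝ := ∑ i : Fin K × Fin N, v i ^ 2 with hQdef
    set S : ℝ := ∑ i : Fin K × Fin N, ∑ j : Fin K × Fin N, v i * (H i j * v j) with hSdef
    have hquad : dotProduct (star v)
        ((Real.sqrt Csq • (1 : Matrix (Fin K × Fin N) (Fin K × Fin N) ℝ) - H).mulVec v)
        = Real.sqrt Csq * Q - S := by
      simp only [dotProduct, Matrix.mulVec, Matrix.sub_apply, Matrix.smul_apply,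
        Matrix.one_apply, star_trivial, Pi.star_apply, smul_eq_mul, mul_ite, ite_mul,
        mul_one, mul_zero, zero_mul, sub_mul, Finset.sum_sub_distrib, Finset.sum_ite_eq,
        Finset.mem_univ, if_true, Finset.mul_sum, Finset.sum_ite_eq']
      rw [hQdef, hSdef, Finset.mul_sum, ← Finset.sum_sub_distrib]
      refine Finset.sum_congr rfl fun i _ => ?_
      rw [mul_sub, Finset.mul_sum]
      congr 1
      ring
    have hS : S = ∑ p : (Fin K × Fin N) × (Fin K × Fin N), H p.1 p.2 * (v p.1 * v p.2) := by
      rw [hSdef, show (Finset.univ : Finset ((Fin K × Fin N) × (Fin K × Fin N)))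
        = Finset.univ ×ˢ Finset.univ from Finset.univ_product_univ.symm, Finset.sum_product]
      refine Finset.sum_congr rfl fun i _ => Finset.sum_congr rfl fun j _ => ?_
      show v i * (H i j * v j) = H i j * (v i * v j)
      ring
    have hvsq : ∑ p : (Fin K × Fin N) × (Fin K × Fin N), (v p.1 * v p.2) ^ 2 = Q ^ 2 := by
      rw [hQdef, sq, Finset.sum_mul_sum]
      rw [show (Finset.univ : Finset ((Fin K × Fin N) × (Fin K × Fin N)))
        = Finset.univ ×ˢ Finset.univ from Finset.univ_product_univ.symm, Finset.sum_product]
      refine Finset.sum_congr rfl fun i _ => Finset.sum_congr rfl fun j _ => ?_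
      show (v i * v j) ^ 2 = v i ^ 2 * v j ^ 2
      ring
    have hHsq : ∑ p : (Fin K × Fin N) × (Fin K × Fin N), (H p.1 p.2) ^ 2 ≤ Csq :=
      le_trans (Finset.sum_le_sum fun p _ => hentry p.1 p.2) (le_of_eq hcompute)
    have hS2 : S ^ 2 ≤ Csq * Q ^ 2 := by
      calc S ^ 2 = (∑ p : (Fin K × Fin N) × (Fin K × Fin N),
            H p.1 p.2 * (v p.1 * v p.2)) ^ 2 := by rw [hS]
        _ ≤ (∑ p : (Fin K × Fin N) × (Fin K × Fin N), (H p.1 p.2) ^ 2) *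
            ∑ p : (Fin K × Fin N) × (Fin K × Fin N), (v p.1 * v p.2) ^ 2 :=
            Finset.sum_mul_sq_le_sq_mul_sq _ _ _
        _ ≤ Csq * Q ^ 2 := by
            rw [hvsq]
            exact mul_le_mul_of_nonneg_right hHsq (sq_nonneg Q)
    have hSle : S ≤ Real.sqrt Csq * Q := by
      have h1 : S ≤ |S| := le_abs_self S
      have h2 : |S| = Real.sqrt (S ^ 2) := (Real.sqrt_sq_eq_abs S).symm
      have h3 : Real.sqrt (S ^ 2) ≤ Real.sqrt (Csq * Q ^ 2) := Real.sqrt_le_sqrt hS2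
      have h4 : Real.sqrt (Csq * Q ^ 2) = Real.sqrt Csq * Q := by
        rw [Real.sqrt_mul hCsq0, Real.sqrt_sq hQ0]
      linarith
    rw [hquad]
    linarith
end
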